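/- arXiv:math/0607345 — 4 statements merged into one kernel-verified Lean document; each statement's English description precedes it below -/
import Mathlib

section
/- For every α ∈ (1,2], c > 0, a > 0 and t > 0, the number variance saturates: lim_{L→∞} V_t^{α,c,a}[L] = (2/(aπ)) (2tc)^{1/α} Γ(1 − 1/α), where Γ is the Gamma function. -/
/-!
Since `(2/π) ∫₀^∞ (1 - cos (mθ)) / θ² dθ = m`, after the substitution `θ ↦ aθ` the number
variance equals `(2/(aπ)) ∫₀^∞ g(θ) (1 - cos (Lθ)) dθ` with `g(θ) = (1 - e^{-2ctθ^α}) / θ²`,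
which is integrable because `α > 1`. By the Riemann–Lebesgue lemma the cosine part vanishes
as `L → ∞`, and an integration by parts turns `∫ g` into a Gamma integral equal to
`(2ct)^{1/α} Γ(1 - 1/α)`.
-/

open MeasureTheory Filter Set

/-- The averaged number variance of the infinite system of independent symmetric
`α`-stable processes started from the equispaced-averaged configuration. -/
noncomputable def numVar (α c a t L : ℝ) : ℝ :=
  L / a + (2 / Real.pi) * ∫ θ in Set.Ioi (0:ℝ),
    Real.exp (-(2 * c * t * (θ / a) ^ α)) * (Real.cos (L * θ / a) - 1) / θ ^ 2

open Real Topology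

lemma integrableOn_cexp_neg_mul_sub_cexp {s : ℝ} (hs : 0 < s) :
    IntegrableOn (fun θ : ℝ => Complex.exp (-s * θ) - Complex.exp ((-s + Complex.I) * θ))
      (Ioi 0) :=
  (integrableOn_exp_mul_complex_Ioi (by simpa using hs) 0).sub
    (integrableOn_exp_mul_complex_Ioi (by simpa using hs) 0)

lemma re_cexp_neg_mul_sub_cexp (s θ : ℝ) :
    (Complex.exp (-s * θ) - Complex.exp ((-s + Complex.I) * θ)).re
      = exp (-(s * θ)) * (1 - cos θ) := by
  simp [Complex.exp_re, mul_sub]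

lemma integrableOn_exp_neg_mul_mul_one_sub_cos {s : ℝ} (hs : 0 < s) :
    IntegrableOn (fun θ : ℝ => exp (-(s * θ)) * (1 - cos θ)) (Ioi 0) := by
  have h := (integrableOn_cexp_neg_mul_sub_cexp hs).re
  simp only [RCLike.re_to_complex, re_cexp_neg_mul_sub_cexp] at h
  exact h

lemma integral_exp_neg_mul_mul_one_sub_cos {s : ℝ} (hs : 0 < s) :
    ∫ θ in Ioi (0:ℝ), exp (-(s * θ)) * (1 - cos θ) = 1 / s - s / (1 + s ^ 2) := by
  have hs' : (-s : ℂ).re < 0 := by simpa using hs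
  have hsI : (-s + Complex.I).re < 0 := by simpa using hs
  have h := integral_re (integrableOn_cexp_neg_mul_sub_cexp hs)
  simp only [RCLike.re_to_complex, re_cexp_neg_mul_sub_cexp] at h
  rw [h, integral_sub (integrableOn_exp_mul_complex_Ioi hs' 0)
    (integrableOn_exp_mul_complex_Ioi hsI 0),
    integral_exp_mul_complex_Ioi hs', integral_exp_mul_complex_Ioi hsI]
  simp [Complex.div_re, Complex.normSq, sq, add_comm]

lemma integrableOn_mul_exp_neg_mul {θ : ℝ} (hθ : 0 < θ) :
    IntegrableOn (fun s : ℝ => s * exp (-(s * θ))) (Ioi 0) := by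
  have h := integrableOn_rpow_mul_exp_neg_mul_rpow (show (-1:ℝ) < 1 by norm_num) one_pos hθ
  simpa [neg_mul, mul_comm θ] using h

lemma integral_mul_exp_neg_mul {θ : ℝ} (hθ : 0 < θ) :
    ∫ s in Ioi (0:ℝ), s * exp (-(s * θ)) = (θ ^ 2)⁻¹ := by
  have h := integral_rpow_mul_exp_neg_mul_rpow one_pos (show (-1:ℝ) < 1 by norm_num) hθ
  norm_num [rpow_neg hθ.le, neg_mul, mul_comm θ] at h
  exact h

/-- Tonelli, with `θ⁻² = ∫₀^∞ s e^{-sθ} ds` and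
`∫₀^∞ e^{-sθ} (1 - cos θ) dθ = s⁻¹ (1 + s²)⁻¹`. -/
lemma lintegral_one_sub_cos_div_sq :
    ∫⁻ θ in Ioi (0:ℝ), ENNReal.ofReal ((1 - cos θ) / θ ^ 2) = ENNReal.ofReal (π / 2) := by
  have hK : ∀ θ s : ℝ, 0 < s → 0 ≤ s * exp (-(s * θ)) * (1 - cos θ) := fun θ s hs =>
    mul_nonneg (mul_nonneg hs.le (exp_pos _).le) (sub_nonneg.2 (cos_le_one θ))
  calc _ = ∫⁻ θ in Ioi 0, ∫⁻ s in Ioi 0,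
          ENNReal.ofReal (s * exp (-(s * θ)) * (1 - cos θ)) := by
        refine setLIntegral_congr_fun measurableSet_Ioi fun θ hθ => ?_
        rw [← ofReal_integral_eq_lintegral_ofReal
          ((integrableOn_mul_exp_neg_mul hθ).mul_const _)
          ((ae_restrict_iff' measurableSet_Ioi).2 (ae_of_all _ fun s hs => hK θ s hs)),
          integral_mul_const, integral_mul_exp_neg_mul hθ, inv_mul_eq_div]
    _ = ∫⁻ s in Ioi 0, ∫⁻ θ in Ioi 0,
          ENNReal.ofReal (s * exp (-(s * θ)) * (1 - cos θ)) :=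
        lintegral_lintegral_swap (by fun_prop)
    _ = ∫⁻ s in Ioi 0, ENNReal.ofReal ((1 + s ^ 2)⁻¹) := by
        refine setLIntegral_congr_fun measurableSet_Ioi fun s hs => ?_
        simp_rw [mul_assoc]
        rw [← ofReal_integral_eq_lintegral_ofReal
          ((integrableOn_exp_neg_mul_mul_one_sub_cos hs).const_mul s)
          (ae_of_all _ fun θ => (mul_assoc s _ _).symm.trans_ge (hK θ s hs)),
          integral_const_mul, integral_exp_neg_mul_mul_one_sub_cos hs]
        have hs0 : s ≠ 0 := ne_of_gt hs
        congr 1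
        field_simp
        ring
    _ = ENNReal.ofReal (π / 2) := by
        rw [← ofReal_integral_eq_lintegral_ofReal integrable_inv_one_add_sq.integrableOn
          (ae_of_all _ fun s => by positivity), integral_Ioi_inv_one_add_sq, arctan_zero,
          sub_zero]

lemma integrableOn_one_sub_cos_div_sq :
    IntegrableOn (fun θ : ℝ => (1 - cos θ) / θ ^ 2) (Ioi 0) := by
  refine ⟨(by fun_prop : Measurable fun θ : ℝ => (1 - cos θ) / θ ^ 2).aestronglyMeasurable,
    ?_⟩
  rw [hasFiniteIntegral_iff_ofReal
    (ae_of_all _ fun θ => div_nonneg (sub_nonneg.2 (cos_le_one θ)) (sq_nonneg θ)),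
    lintegral_one_sub_cos_div_sq]
  exact ENNReal.ofReal_lt_top

lemma integral_one_sub_cos_div_sq : ∫ θ in Ioi (0:ℝ), (1 - cos θ) / θ ^ 2 = π / 2 := by
  rw [integral_eq_lintegral_of_nonneg_ae
    (ae_of_all _ fun θ => div_nonneg (sub_nonneg.2 (cos_le_one θ)) (sq_nonneg θ))
    (by fun_prop : Measurable fun θ : ℝ => (1 - cos θ) / θ ^ 2).aestronglyMeasurable,
    lintegral_one_sub_cos_div_sq, ENNReal.toReal_ofReal (by positivity)]

lemma one_sub_cos_mul_div_sq {m : ℝ} (hm : m ≠ 0) (θ : ℝ) :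
    (1 - cos (m * θ)) / θ ^ 2 = m ^ 2 * ((1 - cos (m * θ)) / (m * θ) ^ 2) := by
  rw [mul_pow, mul_div_assoc', mul_div_mul_left _ _ (pow_ne_zero 2 hm)]

lemma integrableOn_one_sub_cos_mul_div_sq {m : ℝ} (hm : 0 < m) :
    IntegrableOn (fun θ : ℝ => (1 - cos (m * θ)) / θ ^ 2) (Ioi 0) := by
  simp_rw [one_sub_cos_mul_div_sq hm.ne']
  refine Integrable.const_mul ?_ _
  have := (integrableOn_Ioi_comp_mul_left_iff (fun θ => (1 - cos θ) / θ ^ 2) 0 hm).2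
  rw [mul_zero] at this
  exact this integrableOn_one_sub_cos_div_sq

lemma integral_one_sub_cos_mul_div_sq {m : ℝ} (hm : 0 < m) :
    ∫ θ in Ioi (0:ℝ), (1 - cos (m * θ)) / θ ^ 2 = π / 2 * m := by
  have := integral_comp_mul_left_Ioi (fun θ => (1 - cos θ) / θ ^ 2) 0 hm
  rw [mul_zero, integral_one_sub_cos_div_sq, smul_eq_mul] at this
  simp_rw [one_sub_cos_mul_div_sq hm.ne']
  rw [integral_const_mul, this]
  field_simp

open FourierTransform in
lemma tendsto_integral_mul_cos_cocompact {f : ℝ → ℝ} (hf : Integrable f) :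
    Tendsto (fun m : ℝ => ∫ x, f x * cos (m * x)) (cocompact ℝ) (𝓝 0) := by
  have hRL := (Complex.continuous_re.tendsto 0).comp
    ((Real.tendsto_integral_exp_smul_cocompact (fun x => (f x : ℂ))).comp
      (tendsto_cocompact_mul_right₀ (inv_ne_zero two_pi_pos.ne')))
  rw [Complex.zero_re] at hRL
  refine hRL.congr fun m => ?_
  have hint : Integrable (fun x : ℝ => 𝐞 (-(x * (m * (2 * π)⁻¹))) • (f x : ℂ)) := by
    simpa [mul_comm] using (Real.fourierIntegral_convergent_iff (m * (2 * π)⁻¹)).2 hf.ofReal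
  have h := integral_re hint
  simp only [RCLike.re_to_complex] at h
  simp only [Function.comp_apply, ← h]
  congr 1
  ext x
  rw [Circle.smul_def, Real.fourierChar_apply, smul_eq_mul, Complex.re_mul_ofReal,
    Complex.exp_ofReal_mul_I_re, mul_comm,
    show 2 * π * -(x * (m * (2 * π)⁻¹)) = -(m * x) by field_simp, cos_neg]

lemma tendsto_setIntegral_mul_cos_cocompact {f : ℝ → ℝ} {s : Set ℝ} (hs : MeasurableSet s)
    (hf : IntegrableOn f s) :
    Tendsto (fun m : ℝ => ∫ x in s, f x * cos (m * x)) (cocompact ℝ) (𝓝 0) := by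
  have := tendsto_integral_mul_cos_cocompact ((integrable_indicator_iff hs).2 hf)
  simp_rw [← integral_indicator hs, indicator_mul_left]
  exact this

lemma one_sub_exp_neg_mem_Icc {x : ℝ} (hx : 0 ≤ x) : 1 - exp (-x) ∈ Icc 0 (min x 1) := by
  refine ⟨sub_nonneg.2 (exp_le_one_iff.2 (neg_nonpos.2 hx)), le_min ?_ ?_⟩
  · linarith [add_one_le_exp (-x)]
  · linarith [exp_pos (-x)]

section

variable {b α : ℝ}

lemma integrableOn_one_sub_exp_neg_mul_rpow_div_sq (hb : 0 < b) (hα : 1 < α) :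
    IntegrableOn (fun θ : ℝ => (1 - exp (-(b * θ ^ α))) / θ ^ 2) (Ioi 0) := by
  have hmeas : AEStronglyMeasurable (fun θ : ℝ => (1 - exp (-(b * θ ^ α))) / θ ^ 2) :=
    (by fun_prop : Measurable fun θ : ℝ =>
      (1 - exp (-(b * θ ^ α))) / θ ^ 2).aestronglyMeasurable
  have hbound : ∀ θ : ℝ, 0 < θ → ‖(1 - exp (-(b * θ ^ α))) / θ ^ 2‖
      ≤ min (b * θ ^ (α - 2)) (θ ^ (-2 : ℝ)) := by
    intro θ hθ
    obtain ⟨h0, h1⟩ := one_sub_exp_neg_mem_Icc (by positivity : 0 ≤ b * θ ^ α)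
    rw [norm_of_nonneg (by positivity), rpow_neg hθ.le, rpow_two, rpow_sub hθ, rpow_two,
      ← mul_div_assoc, inv_eq_one_div]
    exact le_min (div_le_div_of_nonneg_right (h1.trans (min_le_left _ _)) (by positivity))
      (div_le_div_of_nonneg_right (h1.trans (min_le_right _ _)) (by positivity))
  rw [← Ioc_union_Ioi_eq_Ioi zero_le_one]
  refine IntegrableOn.union ?_ ?_
  · refine ((intervalIntegral.intervalIntegrable_rpow' (by linarith : -1 < α - 2)).1.const_mul
      b).mono' hmeas.restrict ?_
    filter_upwards [ae_restrict_mem measurableSet_Ioc] with θ hθ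
    exact (hbound θ hθ.1).trans (min_le_left _ _)
  · refine (integrableOn_Ioi_rpow_of_lt (by norm_num : (-2:ℝ) < -1) one_pos).mono'
      hmeas.restrict ?_
    filter_upwards [ae_restrict_mem measurableSet_Ioi] with θ hθ
    exact (hbound θ (one_pos.trans hθ)).trans (min_le_right _ _)

lemma norm_one_sub_exp_neg_mul_rpow_div_le (hb : 0 ≤ b) {θ : ℝ} (hθ : 0 < θ) :
    ‖(1 - exp (-(b * θ ^ α))) / θ‖ ≤ min (b * θ ^ (α - 1)) θ⁻¹ := by
  obtain ⟨h0, h1⟩ := one_sub_exp_neg_mem_Icc (by positivity : 0 ≤ b * θ ^ α)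
  rw [norm_of_nonneg (by positivity), rpow_sub_one hθ.ne', ← mul_div_assoc, inv_eq_one_div]
  exact le_min (div_le_div_of_nonneg_right (h1.trans (min_le_left _ _)) hθ.le)
    (div_le_div_of_nonneg_right (h1.trans (min_le_right _ _)) hθ.le)

lemma tendsto_one_sub_exp_neg_mul_rpow_div_nhdsGT_zero (hb : 0 ≤ b) (hα : 1 < α) :
    Tendsto (fun θ => (1 - exp (-(b * θ ^ α))) / θ) (𝓝[>] 0) (𝓝 0) := by
  have hlim : Tendsto (fun θ : ℝ => b * θ ^ (α - 1)) (𝓝[>] 0) (𝓝 0) := by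
    have := ((continuousAt_rpow_const 0 (α - 1) (Or.inr (by linarith))).const_mul b).tendsto
    rw [zero_rpow (by linarith), mul_zero] at this
    exact this.mono_left nhdsWithin_le_nhds
  refine squeeze_zero_norm' ?_ hlim
  filter_upwards [self_mem_nhdsWithin] with θ hθ
  exact (norm_one_sub_exp_neg_mul_rpow_div_le hb hθ).trans (min_le_left _ _)

lemma tendsto_one_sub_exp_neg_mul_rpow_div_atTop (hb : 0 ≤ b) :
    Tendsto (fun θ => (1 - exp (-(b * θ ^ α))) / θ) atTop (𝓝 0) := by
  refine squeeze_zero_norm' ?_ tendsto_inv_atTop_zero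
  filter_upwards [eventually_gt_atTop 0] with θ hθ
  exact (norm_one_sub_exp_neg_mul_rpow_div_le hb hθ).trans (min_le_right _ _)

lemma mul_integral_rpow_sub_two_mul_exp_neg_mul_rpow (hb : 0 < b) (hα : 1 < α) :
    b * α * ∫ θ in Ioi (0:ℝ), θ ^ (α - 2) * exp (-b * θ ^ α)
      = b ^ (1 / α) * Gamma (1 - 1 / α) := by
  have hα0 : α ≠ 0 := by positivity
  have hexp : b * b ^ (-(α - 2 + 1) / α) = b ^ (1 / α) := by
    have h1 : 1 + -(α - 2 + 1) / α = 1 / α := by field_simp; ring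
    rw [← rpow_one_add' hb.le (by rw [h1]; positivity), h1]
  rw [integral_rpow_mul_exp_neg_mul_rpow (by linarith) (by linarith) hb,
    show (α - 2 + 1) / α = 1 - 1 / α by field_simp; ring, ← hexp]
  field_simp

lemma integral_one_sub_exp_neg_mul_rpow_div_sq (hb : 0 < b) (hα : 1 < α) :
    ∫ θ in Ioi (0:ℝ), (1 - exp (-(b * θ ^ α))) / θ ^ 2 = b ^ (1 / α) * Gamma (1 - 1 / α) := by
  have hu : ∀ θ ∈ Ioi (0:ℝ), HasDerivAt (fun θ => 1 - exp (-(b * θ ^ α)))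
      (exp (-(b * θ ^ α)) * (b * (α * θ ^ (α - 1)))) θ := fun θ hθ => by
    simpa using
      (((hasDerivAt_rpow_const (Or.inl (mem_Ioi.1 hθ).ne')).const_mul b).neg.exp).const_sub 1
  have hv : ∀ θ ∈ Ioi (0:ℝ), HasDerivAt (fun θ : ℝ => -θ⁻¹) (θ ^ 2)⁻¹ θ :=
    fun θ hθ => by simpa using (hasDerivAt_inv (mem_Ioi.1 hθ).ne').fun_neg
  have hu'v : EqOn (fun θ => exp (-(b * θ ^ α)) * (b * (α * θ ^ (α - 1))) * -θ⁻¹)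
      (fun θ => -(b * α) * (θ ^ (α - 2) * exp (-b * θ ^ α))) (Ioi 0) := by
    intro θ hθ
    have : θ ^ (α - 1) * θ⁻¹ = θ ^ (α - 2) := by
      rw [← rpow_neg_one, ← rpow_add hθ]
      ring_nf
    simp only [← this, neg_mul]
    ring
  have hint := (integrableOn_rpow_mul_exp_neg_mul_rpow (by linarith : -1 < α - 2)
    (by linarith : 0 < α) hb).const_mul (-(b * α))
  have h_parts := integral_Ioi_mul_deriv_eq_deriv_mul hu hv
    (integrableOn_one_sub_exp_neg_mul_rpow_div_sq hb hα)
    (IntegrableOn.congr_fun hint hu'v.symm measurableSet_Ioi)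
    (by simpa only [Pi.mul_def, mul_neg, neg_zero, div_eq_mul_inv]
      using (tendsto_one_sub_exp_neg_mul_rpow_div_nhdsGT_zero hb.le hα).neg)
    (by simpa only [Pi.mul_def, mul_neg, neg_zero, div_eq_mul_inv]
      using (tendsto_one_sub_exp_neg_mul_rpow_div_atTop hb.le).neg)
  simp only [← div_eq_mul_inv] at h_parts
  rw [h_parts, setIntegral_congr_fun measurableSet_Ioi hu'v, integral_const_mul,
    ← mul_integral_rpow_sub_two_mul_exp_neg_mul_rpow hb hα]
  ring

theorem tendsto_add_integral_exp_neg_mul_rpow_mul_cos_sub_one_div_sq (hb : 0 < b)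
    (hα : 1 < α) :
    Tendsto (fun m : ℝ => m + 2 / π * ∫ θ in Ioi (0:ℝ),
        exp (-(b * θ ^ α)) * (cos (m * θ) - 1) / θ ^ 2) atTop
      (𝓝 (2 / π * (b ^ (1 / α) * Gamma (1 - 1 / α)))) := by
  set g : ℝ → ℝ := fun θ => (1 - exp (-(b * θ ^ α))) / θ ^ 2
  have hg : IntegrableOn g (Ioi 0) := integrableOn_one_sub_exp_neg_mul_rpow_div_sq hb hα
  have hg_integral : ∫ θ in Ioi 0, g θ = b ^ (1 / α) * Gamma (1 - 1 / α) :=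
    integral_one_sub_exp_neg_mul_rpow_div_sq hb hα
  have hlim := (((tendsto_setIntegral_mul_cos_cocompact measurableSet_Ioi hg).mono_left
    atTop_le_cocompact).const_sub (∫ θ in Ioi 0, g θ)).const_mul (2 / π)
  rw [sub_zero, hg_integral] at hlim
  refine hlim.congr' ?_
  filter_upwards [eventually_gt_atTop 0] with m hm
  have hgcos : IntegrableOn (fun θ => g θ * cos (m * θ)) (Ioi 0) :=
    hg.mul_bdd (by fun_prop) (ae_of_all _ fun θ => abs_cos_le_one _)
  have hsplit : ∀ θ, exp (-(b * θ ^ α)) * (cos (m * θ) - 1) / θ ^ 2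
      = g θ - g θ * cos (m * θ) - (1 - cos (m * θ)) / θ ^ 2 := fun θ => by ring
  simp_rw [hsplit]
  have hdiff : IntegrableOn (fun θ => g θ - g θ * cos (m * θ)) (Ioi 0) := hg.sub hgcos
  rw [integral_sub hdiff (integrableOn_one_sub_cos_mul_div_sq hm),
    integral_sub hg hgcos, hg_integral, integral_one_sub_cos_mul_div_sq hm]
  field_simp
  ring

end

lemma numVar_eq_inv_mul (α c t L : ℝ) {a : ℝ} (ha : 0 < a) :
    numVar α c a t L = a⁻¹ * (L + 2 / π * ∫ θ in Ioi (0:ℝ),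
      exp (-(2 * c * t * θ ^ α)) * (cos (L * θ) - 1) / θ ^ 2) := by
  have h := integral_comp_mul_left_Ioi
    (fun θ => exp (-(2 * c * t * (θ / a) ^ α)) * (cos (L * θ / a) - 1) / θ ^ 2) 0 ha
  rw [mul_zero, smul_eq_mul] at h
  have hG : ∀ θ : ℝ,
      exp (-(2 * c * t * (a * θ / a) ^ α)) * (cos (L * (a * θ) / a) - 1) / (a * θ) ^ 2
        = (a ^ 2)⁻¹ * (exp (-(2 * c * t * θ ^ α)) * (cos (L * θ) - 1) / θ ^ 2) := fun θ => by
    rw [mul_div_cancel_left₀ θ ha.ne', mul_left_comm, mul_div_cancel_left₀ _ ha.ne']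
    ring
  simp_rw [hG, integral_const_mul] at h
  rw [numVar, ← mul_inv_cancel_left₀ ha.ne' (∫ θ in Ioi (0:ℝ), _), ← h]
  field_simp

theorem numVar_saturates (α c a t : ℝ) (hα : α ∈ Set.Ioc (1:ℝ) 2)
    (hc : 0 < c) (ha : 0 < a) (ht : 0 < t) :
    Tendsto (fun L => numVar α c a t L) atTop
      (nhds ((2 / (a * Real.pi)) * (2 * t * c) ^ (1 / α) * Real.Gamma (1 - 1 / α))) := by
  have hlim := (tendsto_add_integral_exp_neg_mul_rpow_mul_cos_sub_one_div_sq
    (by positivity : 0 < 2 * c * t) hα.1).const_mul a⁻¹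
  convert hlim using 1
  · exact funext fun L => numVar_eq_inv_mul α c t L ha
  · rw [mul_right_comm 2 t c]
    field_simp
end

section
/- For every α ∈ (0,1], c > 0, a > 0 and t > 0, the number variance diverges: V_t^{α,c,a}[L] → ∞ as L → ∞. -/
/-!
With `b = L/a` and `β = 2ct/a^α`, the identity `∫₀^∞ (1 - cos bθ)/θ² dθ = πb/2` (obtained by
Tonelli from `θ⁻² = ∫₀^∞ s e^{-sθ} ds` and the Laplace transform of `1 - cos bθ`) cancels the
term `L/a`, leaving `V = (2/π) ∫₀^∞ (1 - e^{-βθ^α}) (1 - cos bθ)/θ² dθ`. On `(0, 1]`, convexity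
of `exp` and `α ≤ 1` give `1 - e^{-βθ^α} ≥ (1 - e^{-β}) θ^α ≥ (1 - e^{-β}) θ`, so
`V ≥ (2/π)(1 - e^{-β}) ∫₀¹ (1 - cos bθ)/θ dθ`. The last integral is unbounded in `b`: over
`[δ, 1]` it equals `log (1/δ)` minus a cosine integral which tends to `0` by the
Riemann–Lebesgue lemma.
-/

open MeasureTheory Filter Set

open Real Topology

theorem one_sub_cos_mul_le (b θ : ℝ) : 1 - cos (b * θ) ≤ b ^ 2 / 2 * θ ^ 2 := by
  nlinarith [one_sub_sq_div_two_le_cos (x := b * θ)]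

theorem integrableOn_Ioi_one_sub_cos_div_sq (b : ℝ) :
    IntegrableOn (fun θ : ℝ => (1 - cos (b * θ)) / θ ^ 2) (Ioi 0) := by
  have hmeas : AEStronglyMeasurable (fun θ : ℝ => (1 - cos (b * θ)) / θ ^ 2) :=
    (by fun_prop : Measurable _).aestronglyMeasurable
  have h_nonneg : ∀ θ : ℝ, 0 ≤ (1 - cos (b * θ)) / θ ^ 2 := fun θ =>
    div_nonneg (sub_nonneg.2 (cos_le_one _)) (sq_nonneg _)
  rw [← Ioc_union_Ioi_eq_Ioi zero_le_one]
  refine (Measure.integrableOn_of_bounded (M := b ^ 2 / 2) measure_Ioc_lt_top.ne hmeas ?_).union ?_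
  · filter_upwards [ae_restrict_mem measurableSet_Ioc] with θ hθ
    rw [norm_of_nonneg (h_nonneg θ)]
    exact div_le_of_le_mul₀ (sq_nonneg _) (by positivity) (one_sub_cos_mul_le b θ)
  · refine ((integrableOn_Ioi_rpow_of_lt (a := -2) (by norm_num) one_pos).const_mul 2).mono'
      hmeas.restrict ?_
    filter_upwards [ae_restrict_mem measurableSet_Ioi] with θ (hθ : 1 < θ)
    rw [norm_of_nonneg (h_nonneg θ), rpow_neg (by linarith), rpow_two, ← div_eq_mul_inv]
    gcongr
    linarith [neg_one_le_cos (b * θ)]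

theorem integrableOn_Ioc_one_sub_cos_div (b : ℝ) :
    IntegrableOn (fun θ : ℝ => (1 - cos (b * θ)) / θ) (Ioc 0 1) := by
  refine Measure.integrableOn_of_bounded (M := b ^ 2 / 2) measure_Ioc_lt_top.ne
    (by fun_prop : Measurable _).aestronglyMeasurable ?_
  filter_upwards [ae_restrict_mem measurableSet_Ioc] with θ ⟨hθ0, hθ1⟩
  rw [norm_of_nonneg (div_nonneg (sub_nonneg.2 (cos_le_one _)) hθ0.le)]
  refine div_le_of_le_mul₀ hθ0.le (by positivity) ((one_sub_cos_mul_le b θ).trans ?_)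
  have : θ ^ 2 ≤ θ := by nlinarith
  gcongr

theorem integrableOn_Ioi_mul_exp_neg_mul {θ : ℝ} (hθ : 0 < θ) :
    IntegrableOn (fun s : ℝ => s * exp (-(θ * s))) (Ioi 0) := by
  simpa using integrableOn_rpow_mul_exp_neg_mul_rpow (s := 1) (p := 1) (by norm_num) one_pos hθ

theorem integral_Ioi_mul_exp_neg_mul {θ : ℝ} (hθ : 0 < θ) :
    ∫ s in Ioi 0, s * exp (-(θ * s)) = (θ ^ 2)⁻¹ := by
  have h := integral_rpow_mul_exp_neg_mul_Ioi (a := 2) two_pos hθ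
  norm_num [Gamma_two] at h
  simpa [inv_pow] using h

theorem integral_Ioi_exp_neg_mul_mul_cos {s : ℝ} (hs : 0 < s) (b : ℝ) :
    ∫ θ in Ioi 0, exp (-(s * θ)) * cos (b * θ) = s / (s ^ 2 + b ^ 2) := by
  have ha : (-s + b * Complex.I).re < 0 := by simpa using hs
  have h := congrArg Complex.re (integral_exp_mul_complex_Ioi ha 0)
  rw [← RCLike.re_to_complex, ← integral_re (integrableOn_exp_mul_complex_Ioi ha 0)] at h
  convert h using 1
  · congr 1 with θ
    rw [RCLike.re_to_complex, Complex.exp_re]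
    simp [mul_comm]
  · simp [Complex.div_re, Complex.normSq_apply]
    field_simp

theorem integral_Ioi_exp_neg_mul_mul_one_sub_cos {s : ℝ} (hs : 0 < s) (b : ℝ) :
    ∫ θ in Ioi 0, exp (-(s * θ)) * (1 - cos (b * θ)) = b ^ 2 / (s * (s ^ 2 + b ^ 2)) := by
  have hexp : IntegrableOn (fun θ : ℝ => exp (-(s * θ))) (Ioi 0) := by
    simpa [neg_mul] using exp_neg_integrableOn_Ioi 0 hs
  have hexp_cos : IntegrableOn (fun θ : ℝ => exp (-(s * θ)) * cos (b * θ)) (Ioi 0) :=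
    hexp.mul_bdd (by fun_prop) (ae_of_all _ fun θ => abs_cos_le_one _)
  have h_exp : ∫ θ in Ioi 0, exp (-(s * θ)) = 1 / s := by
    simpa [neg_mul, neg_div] using integral_exp_mul_Ioi (a := -s) (by linarith) 0
  simp_rw [mul_sub, mul_one]
  rw [integral_sub hexp hexp_cos, integral_Ioi_exp_neg_mul_mul_cos hs, h_exp]
  field_simp
  ring

theorem integral_Ioi_sq_div_sq_add_sq {b : ℝ} (hb : 0 < b) :
    ∫ s in Ioi 0, b ^ 2 / (s ^ 2 + b ^ 2) = π * b / 2 := by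
  have h := integral_comp_mul_left_Ioi (fun x : ℝ => (1 + x ^ 2)⁻¹) 0 (inv_pos.mpr hb)
  simp only [mul_zero, integral_Ioi_inv_one_add_sq, arctan_zero, sub_zero, smul_eq_mul,
    inv_inv] at h
  rw [show π * b / 2 = b * (π / 2) by ring, ← h]
  congr 1 with s
  field_simp
  ring

theorem integral_Ioi_one_sub_cos_div_sq {b : ℝ} (hb : 0 < b) :
    ∫ θ in Ioi 0, (1 - cos (b * θ)) / θ ^ 2 = π * b / 2 := by
  let F : ℝ → ℝ → ℝ := fun θ s => s * exp (-(θ * s)) * (1 - cos (b * θ))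
  have hF_nonneg : ∀ θ, ∀ s ∈ Ioi (0 : ℝ), 0 ≤ F θ s := fun θ s (hs : 0 < s) =>
    mul_nonneg (mul_nonneg hs.le (exp_pos _).le) (sub_nonneg.2 (cos_le_one _))
  have h_inner_s : ∀ θ ∈ Ioi (0 : ℝ), ∫ s in Ioi 0, F θ s = (1 - cos (b * θ)) / θ ^ 2 :=
    fun θ hθ => by
      rw [integral_mul_const, integral_Ioi_mul_exp_neg_mul hθ, inv_mul_eq_div]
  have h_inner_θ : ∀ s ∈ Ioi (0 : ℝ), ∫ θ in Ioi 0, F θ s = b ^ 2 / (s ^ 2 + b ^ 2) :=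
    fun s (hs : 0 < s) => by
      simp_rw [F, mul_comm _ s, mul_assoc]
      rw [integral_const_mul, integral_Ioi_exp_neg_mul_mul_one_sub_cos hs]
      field_simp
  have hF : Integrable (Function.uncurry F)
      ((volume.restrict (Ioi 0)).prod (volume.restrict (Ioi 0))) := by
    refine (integrable_prod_iff (by fun_prop)).2 ⟨?_, ?_⟩
    · filter_upwards [ae_restrict_mem measurableSet_Ioi] with θ hθ
      exact (integrableOn_Ioi_mul_exp_neg_mul hθ).mul_const (1 - cos (b * θ))
    · refine (integrableOn_Ioi_one_sub_cos_div_sq b).congr_fun_ae ?_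
      filter_upwards [ae_restrict_mem measurableSet_Ioi] with θ hθ
      rw [← h_inner_s θ hθ]
      refine (setIntegral_congr_fun measurableSet_Ioi fun s hs => ?_).symm
      exact norm_of_nonneg (hF_nonneg θ s hs)
  calc ∫ θ in Ioi 0, (1 - cos (b * θ)) / θ ^ 2 = ∫ θ in Ioi 0, ∫ s in Ioi 0, F θ s :=
        (setIntegral_congr_fun measurableSet_Ioi h_inner_s).symm
    _ = ∫ s in Ioi 0, ∫ θ in Ioi 0, F θ s := integral_integral_swap hF
    _ = ∫ s in Ioi 0, b ^ 2 / (s ^ 2 + b ^ 2) :=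
        setIntegral_congr_fun measurableSet_Ioi h_inner_θ
    _ = π * b / 2 := integral_Ioi_sq_div_sq_add_sq hb

theorem tendsto_integral_cos_mul_mul_atTop {f : ℝ → ℝ} (hf : Integrable f) :
    Tendsto (fun b : ℝ => ∫ θ, cos (b * θ) * f θ) atTop (𝓝 0) := by
  have hscale : Tendsto (fun b : ℝ => b / (2 * π)) atTop (cocompact ℝ) :=
    (tendsto_id.atTop_div_const (by positivity)).mono_right atTop_le_cocompact
  have hRL := (Complex.continuous_re.tendsto 0).comp
    ((Real.tendsto_integral_exp_smul_cocompact fun θ => (f θ : ℂ)).comp hscale)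
  refine (by simpa using hRL : Tendsto _ _ _).congr fun b => ?_
  have hint : Integrable fun θ : ℝ => Real.fourierChar (-(θ * (b / (2 * π)))) • (f θ : ℂ) :=
    hf.norm.mono' (by fun_prop) (ae_of_all _ fun θ => by simp)
  simp only [Function.comp_apply]
  rw [← RCLike.re_to_complex, ← integral_re hint]
  congr 1 with θ
  rw [RCLike.re_to_complex, Circle.smul_def, Real.fourierChar_apply, smul_eq_mul,
    Complex.re_mul_ofReal, Complex.exp_ofReal_mul_I_re, ← cos_neg]
  congr 2
  field_simp

theorem eventually_neg_log_sub_one_le_integral_one_sub_cos_div {δ : ℝ} (hδ0 : 0 < δ)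
    (hδ1 : δ ≤ 1) :
    ∀ᶠ b in atTop, -log δ - 1 ≤ ∫ θ in Ioc 0 1, (1 - cos (b * θ)) / θ := by
  have hinv : IntegrableOn (fun θ : ℝ => θ⁻¹) (Ioc δ 1) :=
    ((continuousOn_inv₀.mono fun θ (hθ : θ ∈ Icc δ 1) =>
      (hδ0.trans_le hθ.1).ne').integrableOn_Icc).mono_set Ioc_subset_Icc_self
  have hcos : ∀ b : ℝ, IntegrableOn (fun θ : ℝ => cos (b * θ) * θ⁻¹) (Ioc δ 1) := fun b =>
    hinv.bdd_mul (by fun_prop) (ae_of_all _ fun θ => abs_cos_le_one _)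
  have hRL : Tendsto (fun b : ℝ => ∫ θ in Ioc δ 1, cos (b * θ) * θ⁻¹) atTop (𝓝 0) := by
    refine (tendsto_integral_cos_mul_mul_atTop
      (hinv.integrable_indicator measurableSet_Ioc)).congr fun b => ?_
    rw [← integral_indicator measurableSet_Ioc]
    congr 1 with θ
    exact (indicator_mul_right _ (fun θ => cos (b * θ)) _).symm
  filter_upwards [hRL.eventually (eventually_le_nhds one_pos)] with b hb
  have h_log : ∫ θ in Ioc δ 1, θ⁻¹ = -log δ := by
    rw [← intervalIntegral.integral_of_le hδ1, integral_inv_of_pos hδ0 one_pos, one_div,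
      log_inv]
  calc -log δ - 1 ≤ (∫ θ in Ioc δ 1, θ⁻¹) - ∫ θ in Ioc δ 1, cos (b * θ) * θ⁻¹ := by
        linarith
    _ = ∫ θ in Ioc δ 1, (1 - cos (b * θ)) / θ := by
        rw [← integral_sub hinv (hcos b)]
        congr 1 with θ
        ring
    _ ≤ ∫ θ in Ioc 0 1, (1 - cos (b * θ)) / θ := by
        refine setIntegral_mono_set (integrableOn_Ioc_one_sub_cos_div b) ?_
          (Ioc_subset_Ioc_left hδ0.le).eventuallyLE
        filter_upwards [ae_restrict_mem measurableSet_Ioc] with θ hθ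
        exact div_nonneg (sub_nonneg.2 (cos_le_one _)) hθ.1.le

theorem tendsto_integral_one_sub_cos_div_atTop :
    Tendsto (fun b : ℝ => ∫ θ in Ioc 0 1, (1 - cos (b * θ)) / θ) atTop atTop := by
  refine tendsto_atTop.2 fun M => ?_
  have hδ1 : exp (-(|M| + 1)) ≤ 1 := exp_le_one_iff.2 (by linarith [abs_nonneg M])
  filter_upwards [eventually_neg_log_sub_one_le_integral_one_sub_cos_div (exp_pos _) hδ1]
    with b hb
  rw [log_exp] at hb
  linarith [le_abs_self M]

theorem mul_one_sub_exp_neg_le (β : ℝ) {u : ℝ} (hu0 : 0 ≤ u) (hu1 : u ≤ 1) :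
    (1 - exp (-β)) * u ≤ 1 - exp (-(β * u)) := by
  have h := convexOn_exp.2 (mem_univ 0) (mem_univ (-β)) (sub_nonneg.2 hu1) hu0 (by ring)
  simp only [smul_eq_mul, mul_zero, zero_add, exp_zero, mul_one] at h
  rw [show u * -β = -(β * u) by ring] at h
  linarith

theorem integrableOn_Ioi_one_sub_exp_mul_one_sub_cos_div_sq {β : ℝ} (hβ : 0 ≤ β) (α b : ℝ) :
    IntegrableOn (fun θ : ℝ => (1 - exp (-(β * θ ^ α))) * ((1 - cos (b * θ)) / θ ^ 2))
      (Ioi 0) := by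
  refine (integrableOn_Ioi_one_sub_cos_div_sq b).bdd_mul (c := 1) (by fun_prop) ?_
  filter_upwards [ae_restrict_mem measurableSet_Ioi] with θ (hθ : 0 < θ)
  have : 0 ≤ β * θ ^ α := mul_nonneg hβ (rpow_nonneg hθ.le α)
  rw [norm_of_nonneg (sub_nonneg.2 (exp_le_one_iff.2 (by linarith)))]
  linarith [exp_pos (-(β * θ ^ α))]

theorem numVar_eq_integral (α c a t : ℝ) {L : ℝ} (hct : 0 ≤ c * t) (ha : 0 < a)
    (hL : 0 < L) :
    numVar α c a t L = 2 / π * ∫ θ in Ioi 0,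
      (1 - exp (-(2 * c * t / a ^ α * θ ^ α))) * ((1 - cos (L / a * θ)) / θ ^ 2) := by
  have hβ : 0 ≤ 2 * c * t / a ^ α := by
    have := rpow_pos_of_pos ha α
    rw [mul_assoc]; positivity
  have h_integrand : ∀ θ ∈ Ioi (0 : ℝ),
      exp (-(2 * c * t * (θ / a) ^ α)) * (cos (L * θ / a) - 1) / θ ^ 2 =
        (1 - exp (-(2 * c * t / a ^ α * θ ^ α))) * ((1 - cos (L / a * θ)) / θ ^ 2)
          - (1 - cos (L / a * θ)) / θ ^ 2 := fun θ (hθ : 0 < θ) => by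
    rw [div_rpow hθ.le ha.le]
    ring_nf
  rw [numVar, setIntegral_congr_fun measurableSet_Ioi h_integrand,
    integral_sub (integrableOn_Ioi_one_sub_exp_mul_one_sub_cos_div_sq hβ α _)
      (integrableOn_Ioi_one_sub_cos_div_sq _),
    integral_Ioi_one_sub_cos_div_sq (div_pos hL ha)]
  field_simp
  ring

theorem mul_integral_le_integral_one_sub_exp_mul {α β : ℝ} (hα0 : 0 ≤ α) (hα1 : α ≤ 1)
    (hβ : 0 ≤ β) (b : ℝ) :
    (1 - exp (-β)) * ∫ θ in Ioc 0 1, (1 - cos (b * θ)) / θ ≤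
      ∫ θ in Ioi 0, (1 - exp (-(β * θ ^ α))) * ((1 - cos (b * θ)) / θ ^ 2) := by
  have hκ : 0 ≤ 1 - exp (-β) := sub_nonneg.2 (exp_le_one_iff.2 (by linarith))
  have h_int := integrableOn_Ioi_one_sub_exp_mul_one_sub_cos_div_sq hβ α b
  rw [← integral_const_mul]
  calc ∫ θ in Ioc 0 1, (1 - exp (-β)) * ((1 - cos (b * θ)) / θ)
      ≤ ∫ θ in Ioc 0 1, (1 - exp (-(β * θ ^ α))) * ((1 - cos (b * θ)) / θ ^ 2) := by
        refine setIntegral_mono_on ((integrableOn_Ioc_one_sub_cos_div b).const_mul _)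
          (h_int.mono_set Ioc_subset_Ioi_self) measurableSet_Ioc fun θ ⟨hθ0, hθ1⟩ => ?_
        have h_pow : θ ≤ θ ^ α := by
          simpa using rpow_le_rpow_of_exponent_ge hθ0 hθ1 hα1
        have h_exp :=
          mul_one_sub_exp_neg_le β (rpow_nonneg hθ0.le α) (rpow_le_one hθ0.le hθ1 hα0)
        have h_cos := sub_nonneg.2 (cos_le_one (b * θ))
        calc (1 - exp (-β)) * ((1 - cos (b * θ)) / θ)
            = (1 - exp (-β)) * θ * ((1 - cos (b * θ)) / θ ^ 2) := by field_simp
          _ ≤ (1 - exp (-(β * θ ^ α))) * ((1 - cos (b * θ)) / θ ^ 2) := by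
            gcongr
            exact (mul_le_mul_of_nonneg_left h_pow hκ).trans h_exp
    _ ≤ ∫ θ in Ioi 0, (1 - exp (-(β * θ ^ α))) * ((1 - cos (b * θ)) / θ ^ 2) := by
        refine setIntegral_mono_set h_int ?_ Ioc_subset_Ioi_self.eventuallyLE
        filter_upwards [ae_restrict_mem measurableSet_Ioi] with θ (hθ : 0 < θ)
        have : 0 ≤ β * θ ^ α := mul_nonneg hβ (rpow_nonneg hθ.le α)
        exact mul_nonneg (sub_nonneg.2 (exp_le_one_iff.2 (by linarith)))
          (div_nonneg (sub_nonneg.2 (cos_le_one _)) (sq_nonneg _))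

theorem numVar_diverges (α c a t : ℝ) (hα : α ∈ Set.Ioc (0:ℝ) 1)
    (hc : 0 < c) (ha : 0 < a) (ht : 0 < t) :
    Tendsto (fun L => numVar α c a t L) atTop atTop := by
  set β := 2 * c * t / a ^ α
  have hβ : 0 < β := by have := rpow_pos_of_pos ha α; positivity
  have hκ : 0 < 2 / π * (1 - exp (-β)) :=
    mul_pos (div_pos two_pos pi_pos) (sub_pos.2 (exp_lt_one_iff.2 (neg_lt_zero.2 hβ)))
  have h_lower := (tendsto_integral_one_sub_cos_div_atTop.comp
    (tendsto_id.atTop_div_const ha)).const_mul_atTop hκ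
  refine tendsto_atTop_mono' _ ?_ h_lower
  filter_upwards [eventually_gt_atTop 0] with L hL
  rw [numVar_eq_integral α c a t (mul_pos hc ht).le ha hL, mul_assoc]
  exact mul_le_mul_of_nonneg_left
    (mul_integral_le_integral_one_sub_exp_mul hα.1.le hα.2 hβ.le _) (by positivity)
end

section
/- For α = 1 and every c > 0, a > 0, t > 0, the number variance grows logarithmically: lim_{L→∞} V_t^{1,c,a}[L] / log L = 4ct/(aπ). -/
open MeasureTheory Filter Set

/-!
For `α = 1` the damping factor is `exp (-(b * θ))` with `b = 2ct/a`, and the integral has a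
closed form: writing `(1 - cos (l θ)) / θ² = ∫₀ˡ ∫₀ˢ cos (r θ) dr ds` and exchanging the order of
integration twice reduces it to the Laplace transform `b / (b² + r²)` of `cos (r ·)`, giving
`(b/2) log (1 + (l/b)²) - l arctan (l/b)`. With `l = L/a` the linear term `L/a` cancels against
`(2/π) (L/a) (π/2)`, leaving the bounded part `(2/(πa)) L arctan (2ct/L)` and the logarithmic
part `(2ct/(aπ)) log (1 + (L/2ct)²) ~ (4ct/(aπ)) log L`.
-/

open Real Topology

theorem integral_exp_neg_mul_mul_cos_Ioi {b : ℝ} (hb : 0 < b) (r : ℝ) :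
    ∫ u in Ioi (0:ℝ), exp (-(b * u)) * cos (r * u) = b / (b ^ 2 + r ^ 2) := by
  set z : ℂ := -b + r * Complex.I
  have hz : z.re < 0 := by simp [z, hb]
  have hre : ∀ u : ℝ, exp (-(b * u)) * cos (r * u) = (Complex.exp (z * u)).re := by
    intro u; simp [z, Complex.exp_re]
  have hint := integral_re (integrableOn_exp_mul_complex_Ioi hz 0)
  simp only [RCLike.re_to_complex] at hint
  simp_rw [hre, hint, integral_exp_mul_complex_Ioi hz 0]
  simp [z, Complex.div_re, Complex.normSq, sq]

theorem integrable_prod_Ioi_Ioc_of_norm_le_exp {f : ℝ × ℝ → ℝ} {b s C : ℝ} (hb : 0 < b)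
    (hf : AEStronglyMeasurable f ((volume.restrict (Ioi 0)).prod (volume.restrict (Ioc 0 s))))
    (hbound : ∀ u ∈ Ioi (0:ℝ), ∀ r ∈ Ioc 0 s, ‖f (u, r)‖ ≤ exp (-(b * u)) * C) :
    Integrable f ((volume.restrict (Ioi 0)).prod (volume.restrict (Ioc 0 s))) := by
  have hg : Integrable (fun z : ℝ × ℝ => exp (-b * z.1) * C)
      ((volume.restrict (Ioi 0)).prod (volume.restrict (Ioc 0 s))) :=
    (exp_neg_integrableOn_Ioi 0 hb).mul_prod (integrable_const C)
  refine hg.mono' hf ?_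
  rw [Measure.prod_restrict, ae_restrict_iff' (measurableSet_Ioi.prod measurableSet_Ioc)]
  filter_upwards with z hz
  simpa using hbound z.1 hz.1 z.2 hz.2

theorem integral_exp_neg_mul_mul_sin_div_Ioi {b s : ℝ} (hb : 0 < b) (hs : 0 ≤ s) :
    ∫ u in Ioi (0:ℝ), exp (-(b * u)) * (sin (s * u) / u) = arctan (s / b) := by
  have hprod : Integrable (Function.uncurry fun u r => exp (-(b * u)) * cos (r * u))
      ((volume.restrict (Ioi 0)).prod (volume.restrict (Ioc 0 s))) := by
    refine integrable_prod_Ioi_Ioc_of_norm_le_exp (C := 1) hb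
      (by fun_prop) fun u _ r _ => ?_
    simpa [abs_of_pos (exp_pos _)] using
      mul_le_mul_of_nonneg_left (abs_cos_le_one (r * u)) (exp_pos (-(b * u))).le
  have hinner : ∀ u ∈ Ioi (0:ℝ), exp (-(b * u)) * (sin (s * u) / u)
      = ∫ r in Ioc 0 s, exp (-(b * u)) * cos (r * u) := by
    intro u hu
    rw [integral_const_mul, ← intervalIntegral.integral_of_le hs,
      intervalIntegral.integral_comp_mul_right cos (ne_of_gt hu)]
    simp [integral_cos, div_eq_inv_mul]
  rw [setIntegral_congr_fun measurableSet_Ioi hinner, integral_integral_swap hprod,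
    setIntegral_congr_fun measurableSet_Ioc fun r _ => integral_exp_neg_mul_mul_cos_Ioi hb r,
    ← intervalIntegral.integral_of_le hs, integral_div_sq_add_sq]
  simp

theorem integral_arctan_div {b : ℝ} (hb : b ≠ 0) (l : ℝ) :
    ∫ s in (0:ℝ)..l, arctan (s / b) = l * arctan (l / b) - b / 2 * log (1 + (l / b) ^ 2) := by
  have hderiv : ∀ s ∈ uIcc (0:ℝ) l, HasDerivAt
      (fun s => s * arctan (s / b) - b / 2 * log (1 + (s / b) ^ 2)) (arctan (s / b)) s := by
    intro s _
    have hpos : 0 < 1 + (s / b) ^ 2 := by positivity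
    have hquot : HasDerivAt (fun s => s / b) (1 / b) s := (hasDerivAt_id s).div_const b
    have := ((hasDerivAt_id s).mul hquot.arctan).sub
      ((((hquot.pow 2).const_add 1).log hpos.ne').const_mul (b / 2))
    refine this.congr_deriv ?_
    simp only [one_mul, id, one_div, Nat.cast_ofNat, Nat.add_one_sub_one, pow_one, Pi.pow_apply]
    field_simp
    ring
  rw [intervalIntegral.integral_eq_sub_of_hasDerivAt hderiv
    ((continuous_arctan.comp (continuous_id.div_const b)).intervalIntegrable 0 l)]
  simp

theorem integral_exp_neg_mul_mul_cos_sub_one_div_sq_Ioi {b l : ℝ} (hb : 0 < b) (hl : 0 ≤ l) :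
    ∫ u in Ioi (0:ℝ), exp (-(b * u)) * (cos (l * u) - 1) / u ^ 2
      = b / 2 * log (1 + (l / b) ^ 2) - l * arctan (l / b) := by
  have hprod : Integrable (Function.uncurry fun u s => exp (-(b * u)) * (sin (s * u) / u))
      ((volume.restrict (Ioi 0)).prod (volume.restrict (Ioc 0 l))) := by
    refine integrable_prod_Ioi_Ioc_of_norm_le_exp (C := l) hb (by fun_prop) fun u hu s hs => ?_
    have hsin : |sin (s * u)| ≤ l * u := (abs_sin_le_abs).trans <| by
      rw [abs_of_pos (mul_pos hs.1 hu)]; exact mul_le_mul_of_nonneg_right hs.2 (le_of_lt hu)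
    rw [Function.uncurry_apply_pair, norm_mul, norm_div, Real.norm_of_nonneg (exp_pos _).le,
      Real.norm_of_nonneg hu.le]
    gcongr
    exact (div_le_iff₀ hu).2 hsin
  have hinner : ∀ u ∈ Ioi (0:ℝ), exp (-(b * u)) * (cos (l * u) - 1) / u ^ 2
      = -∫ s in Ioc 0 l, exp (-(b * u)) * (sin (s * u) / u) := by
    intro u hu
    rw [integral_const_mul, ← intervalIntegral.integral_of_le hl, intervalIntegral.integral_div,
      intervalIntegral.integral_comp_mul_right sin (ne_of_gt hu), integral_sin]
    simp only [zero_mul, cos_zero, smul_eq_mul]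
    field_simp
    ring
  rw [setIntegral_congr_fun measurableSet_Ioi hinner, integral_neg, integral_integral_swap hprod,
    setIntegral_congr_fun measurableSet_Ioc fun s hs =>
      integral_exp_neg_mul_mul_sin_div_Ioi hb hs.1.le,
    ← intervalIntegral.integral_of_le hl, integral_arctan_div hb.ne']
  ring

theorem tendsto_mul_arctan_div_atTop (k : ℝ) :
    Tendsto (fun L => L * arctan (k / L)) atTop (𝓝 k) := by
  rcases eq_or_ne k 0 with rfl | hk
  · simp
  have hslope : Tendsto (fun y => y⁻¹ * arctan y) (𝓝[≠] 0) (𝓝 1) := by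
    simpa using (hasDerivAt_arctan 0).tendsto_slope_zero
  have hquot : Tendsto (fun L => k / L) atTop (𝓝[≠] 0) :=
    tendsto_nhdsWithin_iff.2 ⟨tendsto_const_nhds.div_atTop tendsto_id,
      (eventually_ne_atTop 0).mono fun L hL => div_ne_zero hk hL⟩
  have := (hslope.comp hquot).const_mul k
  rw [mul_one] at this
  refine this.congr' ((eventually_ne_atTop 0).mono fun L hL => ?_)
  simp only [Function.comp_apply, inv_div]
  field_simp

theorem tendsto_log_one_add_div_sq_div_log_atTop {k : ℝ} (hk : k ≠ 0) :
    Tendsto (fun L => log (1 + (L / k) ^ 2) / log L) atTop (𝓝 2) := by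
  have hrest : Tendsto (fun L => log (L⁻¹ ^ 2 + k⁻¹ ^ 2) / log L) atTop (𝓝 0) := by
    refine Tendsto.div_atTop (Tendsto.log (x := k⁻¹ ^ 2) ?_ (by positivity)) tendsto_log_atTop
    simpa only [ne_eq, OfNat.ofNat_ne_zero, not_false_eq_true, zero_pow, zero_add] using
      (tendsto_inv_atTop_zero.pow 2).add_const (k⁻¹ ^ 2)
  have := hrest.const_add 2
  rw [add_zero] at this
  refine this.congr' ((eventually_gt_atTop 1).mono fun L hL => ?_)
  have hL0 : 0 < L := one_pos.trans hL
  have hlog : log L ≠ 0 := (log_pos hL).ne'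
  have hsplit : 1 + (L / k) ^ 2 = L ^ 2 * (L⁻¹ ^ 2 + k⁻¹ ^ 2) := by field_simp
  dsimp only
  rw [hsplit, log_mul (by positivity) (by positivity), log_pow]
  field_simp
  push_cast
  ring

theorem numVar_one_eq {c a t L : ℝ} (hct : 0 < c * t) (ha : 0 < a) (hL : 0 < L) :
    numVar 1 c a t L = 2 / (π * a) * (L * arctan (2 * c * t / L))
      + 2 * c * t / (a * π) * log (1 + (L / (2 * c * t)) ^ 2) := by
  have hb : 0 < 2 * c * t / a := by rw [mul_assoc]; positivity
  have hintegrand : ∀ θ : ℝ, exp (-(2 * c * t * (θ / a) ^ (1:ℝ))) * (cos (L * θ / a) - 1) / θ ^ 2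
      = exp (-(2 * c * t / a * θ)) * (cos (L / a * θ) - 1) / θ ^ 2 := by
    intro θ
    rw [rpow_one, mul_div_assoc', div_mul_eq_mul_div, mul_div_right_comm L]
  have hratio : L / a / (2 * c * t / a) = (2 * c * t / L)⁻¹ := by field_simp
  rw [numVar, funext hintegrand,
    integral_exp_neg_mul_mul_cos_sub_one_div_sq_Ioi hb (div_pos hL ha).le, hratio,
    arctan_inv_of_pos (by rw [mul_assoc]; positivity), ← hratio]
  field_simp
  ring

theorem numVar_log_growth_cauchy (c a t : ℝ) (hc : 0 < c) (ha : 0 < a) (ht : 0 < t) :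
    Tendsto (fun L : ℝ => numVar 1 c a t L / Real.log L) atTop
      (nhds (4 * c * t / (a * Real.pi))) := by
  have hk : 2 * c * t ≠ 0 := by positivity
  have hbounded := ((tendsto_mul_arctan_div_atTop (2 * c * t)).div_atTop
    tendsto_log_atTop).const_mul (2 / (π * a))
  have hlog := (tendsto_log_one_add_div_sq_div_log_atTop hk).const_mul (2 * c * t / (a * π))
  have hlim : 2 / (π * a) * 0 + 2 * c * t / (a * π) * 2 = 4 * c * t / (a * π) := by ring
  rw [← hlim]
  refine (hbounded.add hlog).congr' ((eventually_gt_atTop 0).mono fun L hL => ?_)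
  dsimp only
  rw [numVar_one_eq (mul_pos hc ht) ha hL]
  ring
end

section
/- For every α ∈ (0,2], c > 0, a > 0, t > 0 and s > 0, the number variance scales as V_t^{α,c,a}[s t^{1/α}] = t^{1/α} f^{α,c,a}(s), where f^{α,c,a}(s) := (4s/(aπ)) ∫₀^∞ u^{-2} sin²(u/2) (1 − e^{-2c(u/s)^α}) du; in particular f^{α,c,a}(s) = V_1^{α,c,a}[s]. -/
open MeasureTheory Filter Set

/-- The limiting variance function of the fluctuation process. -/
noncomputable def fVar (α c a s : ℝ) : ℝ :=
  (4 * s / (a * Real.pi)) * ∫ u in Set.Ioi (0:ℝ),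
    Real.sin (u / 2) ^ 2 * (1 - Real.exp (-(2 * c * (u / s) ^ α))) / u ^ 2

/-!
Substituting `θ = a u / L` and `cos u - 1 = -2 sin² (u / 2)` writes `V_t[L]` as
`L / a - 4 L / (a π) ∫₀^∞ exp (-2 c t (u / L)^α) sin² (u / 2) / u² du`; for `L = s t^{1/α}` the
damping factor no longer depends on `t`. The function `f` differs from this only through the
undamped integral `∫₀^∞ sin² (u / 2) / u² du = π / 4`, which is computed by writing
`1 / u² = ∫₀^∞ t e^{-u t} dt` and swapping the integrals (Tonelli): the inner integral is then the
Laplace transform of `sin² (u / 2)`, and what remains is an arctangent integral.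
-/

open Real

lemma sin_half_sq (x : ℝ) : sin (x / 2) ^ 2 = (1 - cos x) / 2 := by
  rw [sin_sq_eq_half_sub, mul_div_cancel₀ x two_ne_zero]
  ring

theorem integral_exp_neg_mul_cos_Ioi {t : ℝ} (ht : 0 < t) :
    ∫ u in Ioi (0:ℝ), exp (-(t * u)) * cos u = t / (t ^ 2 + 1) := by
  have hre : (-t + Complex.I).re < 0 := by simpa using ht
  have hpt : ∀ u : ℝ, exp (-(t * u)) * cos u = (Complex.exp ((-t + Complex.I) * u)).re :=
    fun u => by simp [Complex.exp_re]
  simp_rw [hpt, ← RCLike.re_to_complex]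
  rw [integral_re (integrableOn_exp_mul_complex_Ioi hre 0), integral_exp_mul_complex_Ioi hre 0]
  simp [Complex.div_re, Complex.normSq, sq]

theorem integral_exp_neg_mul_sin_half_sq_Ioi {t : ℝ} (ht : 0 < t) :
    ∫ u in Ioi (0:ℝ), exp (-(t * u)) * sin (u / 2) ^ 2 = 1 / (2 * t * (t ^ 2 + 1)) := by
  have hexp : IntegrableOn (fun u => exp (-(t * u))) (Ioi 0) := by
    simpa using integrableOn_exp_mul_Ioi (neg_lt_zero.2 ht) 0
  have hcos : IntegrableOn (fun u => exp (-(t * u)) * cos u) (Ioi 0) :=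
    hexp.mul_bdd (c := 1) (by fun_prop) (ae_of_all _ fun u => abs_cos_le_one u)
  simp_rw [sin_half_sq, mul_div_assoc', mul_sub, mul_one]
  rw [integral_div, integral_sub hexp hcos, integral_exp_neg_mul_cos_Ioi ht]
  have := integral_exp_mul_Ioi (neg_lt_zero.2 ht) 0
  simp only [neg_mul, mul_zero, exp_zero] at this
  rw [this]
  field_simp
  ring

lemma lintegral_ofReal_eq_of_integral_eq {α : Type*} [MeasurableSpace α] {μ : Measure α}
    {f : α → ℝ} {v : ℝ} (hf : 0 ≤ᵐ[μ] f) (hv : 0 < v) (h : ∫ x, f x ∂μ = v) :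
    ∫⁻ x, ENNReal.ofReal (f x) ∂μ = ENNReal.ofReal v := by
  -- a nonzero Bochner integral forces integrability
  rw [← h, ofReal_integral_eq_lintegral_ofReal (Integrable.of_integral_ne_zero (h ▸ hv.ne')) hf]

theorem integral_mul_exp_neg_mul_Ioi {u : ℝ} (hu : 0 < u) :
    ∫ t in Ioi (0:ℝ), t * exp (-(u * t)) = 1 / u ^ 2 := by
  convert integral_rpow_mul_exp_neg_mul_Ioi two_pos hu using 1 <;> norm_num

theorem integral_sin_half_sq_div_sq_Ioi :
    ∫ u in Ioi (0:ℝ), sin (u / 2) ^ 2 / u ^ 2 = π / 4 := by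
  set F : ℝ → ℝ → ℝ := fun u t => sin (u / 2) ^ 2 * (t * exp (-(u * t))) with hF
  have hF_nonneg : ∀ u t, 0 < t → 0 ≤ F u t := fun u t ht =>
    mul_nonneg (sq_nonneg _) (mul_nonneg ht.le (exp_pos _).le)
  have inner_t : ∀ u ∈ Ioi (0:ℝ),
      ∫⁻ t in Ioi 0, ENNReal.ofReal (F u t) = ENNReal.ofReal (sin (u / 2) ^ 2 / u ^ 2) := by
    intro u (hu : 0 < u)
    by_cases hsin : sin (u / 2) = 0
    · simp [hF, hsin]
    refine lintegral_ofReal_eq_of_integral_eq ?_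
      (div_pos (pow_two_pos_of_ne_zero hsin) (pow_pos hu 2)) ?_
    · filter_upwards [ae_restrict_mem measurableSet_Ioi] with t ht using hF_nonneg u t ht
    · rw [integral_const_mul, integral_mul_exp_neg_mul_Ioi hu, mul_one_div]
  have inner_u : ∀ t ∈ Ioi (0:ℝ),
      ∫⁻ u in Ioi 0, ENNReal.ofReal (F u t) = ENNReal.ofReal (2⁻¹ * (1 + t ^ 2)⁻¹) := by
    intro t (ht : 0 < t)
    refine lintegral_ofReal_eq_of_integral_eq (ae_of_all _ fun u => hF_nonneg u t ht)
      (by positivity) ?_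
    have hpt : ∀ u, F u t = t * (exp (-(t * u)) * sin (u / 2) ^ 2) := fun u => by
      rw [hF, mul_comm t u]; ring
    simp_rw [hpt]
    rw [integral_const_mul, integral_exp_neg_mul_sin_half_sq_Ioi ht]
    field_simp
    ring
  have hlint :
      ∫⁻ u in Ioi 0, ENNReal.ofReal (sin (u / 2) ^ 2 / u ^ 2) = ENNReal.ofReal (π / 4) :=
    calc ∫⁻ u in Ioi 0, ENNReal.ofReal (sin (u / 2) ^ 2 / u ^ 2)
        = ∫⁻ u in Ioi 0, ∫⁻ t in Ioi 0, ENNReal.ofReal (F u t) :=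
          (setLIntegral_congr_fun measurableSet_Ioi inner_t).symm
      _ = ∫⁻ t in Ioi 0, ∫⁻ u in Ioi 0, ENNReal.ofReal (F u t) :=
          lintegral_lintegral_swap (by fun_prop)
      _ = ∫⁻ t in Ioi 0, ENNReal.ofReal (2⁻¹ * (1 + t ^ 2)⁻¹) :=
          setLIntegral_congr_fun measurableSet_Ioi inner_u
      _ = ENNReal.ofReal (π / 4) := by
          refine lintegral_ofReal_eq_of_integral_eq (ae_of_all _ fun t => by positivity)
            (by positivity) ?_
          rw [integral_const_mul, integral_Ioi_inv_one_add_sq, arctan_zero]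
          ring
  rw [integral_eq_lintegral_of_nonneg_ae (ae_of_all _ fun u => by positivity)
    (by fun_prop : Measurable _).aestronglyMeasurable,
    hlint, ENNReal.toReal_ofReal (by positivity)]

theorem integrableOn_sin_half_sq_div_sq_Ioi :
    IntegrableOn (fun u : ℝ => sin (u / 2) ^ 2 / u ^ 2) (Ioi 0) :=
  Integrable.of_integral_ne_zero (integral_sin_half_sq_div_sq_Ioi ▸ by positivity)

theorem numVar_eq_sub_integral (α c t : ℝ) {a L : ℝ} (ha : 0 < a) (hL : 0 < L) :
    numVar α c a t L = L / a - 4 * L / (a * π) *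
      ∫ u in Ioi (0:ℝ), exp (-(2 * c * t * (u / L) ^ α)) * (sin (u / 2) ^ 2 / u ^ 2) := by
  have hk : 0 < a / L := div_pos ha hL
  have hpt : ∀ u : ℝ,
      exp (-(2 * c * t * (a / L * u / a) ^ α)) * (cos (L * (a / L * u) / a) - 1) / (a / L * u) ^ 2 =
        -2 * (L / a) ^ 2 * (exp (-(2 * c * t * (u / L) ^ α)) * (sin (u / 2) ^ 2 / u ^ 2)) := by
    intro u
    rw [sin_half_sq]
    field_simp
    ring
  have hsub := integral_comp_mul_left_Ioi'
    (fun θ => exp (-(2 * c * t * (θ / a) ^ α)) * (cos (L * θ / a) - 1) / θ ^ 2) 0 hk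
  simp only [mul_zero, hpt, integral_const_mul, smul_eq_mul] at hsub
  rw [numVar, ← hsub]
  field_simp
  ring

theorem fVar_eq_sub_integral (α a : ℝ) {c s : ℝ} (hc : 0 ≤ c) (hs : 0 ≤ s) :
    fVar α c a s = s / a - 4 * s / (a * π) *
      ∫ u in Ioi (0:ℝ), exp (-(2 * c * (u / s) ^ α)) * (sin (u / 2) ^ 2 / u ^ 2) := by
  have hdamp : IntegrableOn
      (fun u => exp (-(2 * c * (u / s) ^ α)) * (sin (u / 2) ^ 2 / u ^ 2)) (Ioi 0) := by
    refine integrableOn_sin_half_sq_div_sq_Ioi.bdd_mul (c := 1)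
      (by fun_prop : Measurable _).aestronglyMeasurable ?_
    filter_upwards [ae_restrict_mem measurableSet_Ioi] with u (hu : 0 < u)
    rw [norm_of_nonneg (exp_pos _).le, exp_le_one_iff, neg_nonpos]
    exact mul_nonneg (by positivity) (rpow_nonneg (div_nonneg hu.le hs) α)
  have hpt : ∀ u : ℝ, sin (u / 2) ^ 2 * (1 - exp (-(2 * c * (u / s) ^ α))) / u ^ 2 =
      sin (u / 2) ^ 2 / u ^ 2 - exp (-(2 * c * (u / s) ^ α)) * (sin (u / 2) ^ 2 / u ^ 2) :=
    fun u => by ring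
  rw [fVar, integral_congr_ae (ae_of_all _ hpt),
    integral_sub integrableOn_sin_half_sq_div_sq_Ioi hdamp, integral_sin_half_sq_div_sq_Ioi]
  field_simp

theorem numVar_scaling (α c a t s : ℝ) (hα : α ∈ Set.Ioc (0:ℝ) 2)
    (hc : 0 < c) (ha : 0 < a) (ht : 0 < t) (hs : 0 < s) :
    numVar α c a t (s * t ^ (1 / α)) = t ^ (1 / α) * fVar α c a s ∧
      fVar α c a s = numVar α c a 1 s := by
  have hr : 0 < t ^ (1 / α) := rpow_pos_of_pos ht _
  have hscale : ∀ u ∈ Ioi (0:ℝ),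
      t * (u / (s * t ^ (1 / α))) ^ α = (u / s) ^ α := fun u hu => by
    rw [← div_div, div_rpow (div_nonneg (le_of_lt hu) hs.le) hr.le, ← rpow_mul ht.le,
      one_div_mul_cancel hα.1.ne', rpow_one, mul_div_cancel₀ _ ht.ne']
  rw [numVar_eq_sub_integral _ _ _ ha (mul_pos hs hr), numVar_eq_sub_integral _ _ _ ha hs,
    fVar_eq_sub_integral _ _ hc.le hs.le,
    setIntegral_congr_fun measurableSet_Ioi fun u hu => by rw [mul_assoc _ t, hscale u hu]]
  exact ⟨by ring, by simp only [mul_one]⟩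
end
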